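/- arXiv:1508.02853 — 2 statements merged into one kernel-verified Lean document; each statement's English description precedes it below -/
import Mathlib

section
/- Let η₁, η₂, … be independent real-valued random variables such that (i) sup_i E[e^{δη_i}] < ∞ for some δ > 0, (ii) lim_{u→∞} sup_i E[|η_i| 1_{η_i ≤ -u}] = 0, and (iii) limsup_{n→∞} (1/n) Σ_{i=1}^n E[η_i] < 0. Then there exist constants c₃ > 0 and c₄ > 0 such that P(sup_{k≥1} Σ_{i=1}^k η_i > x) ≤ c₃ e^{-c₄ x} for all x ≥ 0. -/
/-!
For `0 ≤ λ ≤ δ / 2` a second-order expansion of `exp (λ t)` gives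
`E exp (λ η) ≤ 1 + λ E η + λ E[|η|; η ≤ -u] + λ² (u² + 16 δ⁻² E exp (δ η))`:
on `t ≤ -u` the linear term is absorbed by the truncated negative part, on `(-u, 0]` the
quadratic error is at most `λ² u²`, and for `t > 0` it is dominated by `exp (δ t)`.
Choosing `u` by (ii) and then `λ` small makes both error terms at most `λ ε` uniformly in `i`,
so `E exp (λ η_i) ≤ exp (λ (E η_i + 2ε))`. By (iii) the partial sums of the means are at most
`B - 3εn`, hence by independence `E exp (λ S_n) ≤ exp (λ B) exp (-λ ε n)`. Chernoff's bound
for each `S_n` and a union bound over `n` then leave a geometric series times `exp (-λ x)`.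
-/

open MeasureTheory ProbabilityTheory Filter

namespace Real

theorem exp_sub_one_le_mul_exp (x : ℝ) : exp x - 1 ≤ x * exp x := by
  have h := mul_le_mul_of_nonneg_right (by linarith [add_one_le_exp (-x)] : 1 - x ≤ exp (-x))
    (exp_pos x).le
  rw [← exp_add, neg_add_cancel, exp_zero] at h
  linarith

theorem exp_le_one_add_add_sq_of_nonpos {x : ℝ} (hx : x ≤ 0) : exp x ≤ 1 + x + x ^ 2 := by
  nlinarith [exp_sub_one_le_mul_exp x, add_one_le_exp x]

theorem exp_le_one_add_add_sq_mul_exp {x : ℝ} (hx : 0 ≤ x) :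
    exp x ≤ 1 + x + x ^ 2 * exp x := by
  nlinarith [exp_sub_one_le_mul_exp x, add_one_le_exp x]

theorem sq_mul_exp_le_of_le_half {δ t l : ℝ} (hδ : 0 < δ) (ht : 0 ≤ t) (hl : l ≤ δ / 2) :
    t ^ 2 * exp (l * t) ≤ 16 / δ ^ 2 * exp (δ * t) := by
  have hsq : (δ * t / 4) ^ 2 ≤ exp (δ * t / 2) := by
    calc (δ * t / 4) ^ 2 ≤ exp (δ * t / 4) ^ 2 := by
          gcongr
          linarith [add_one_le_exp (δ * t / 4)]
      _ = exp (δ * t / 2) := by rw [← exp_nat_mul]; ring_nf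
  have hexp : exp (l * t) ≤ exp (δ * t / 2) := exp_le_exp.mpr (by nlinarith)
  calc t ^ 2 * exp (l * t) = 16 / δ ^ 2 * (δ * t / 4) ^ 2 * exp (l * t) := by
        field_simp; ring
    _ ≤ 16 / δ ^ 2 * exp (δ * t / 2) * exp (δ * t / 2) := by gcongr
    _ = 16 / δ ^ 2 * exp (δ * t) := by rw [mul_assoc, ← exp_add]; ring_nf

theorem exp_mul_le_one_add_mul_add_indicator {δ l u : ℝ} (hδ : 0 < δ) (hl : 0 ≤ l)
    (hlδ : l ≤ δ / 2) (hu : 0 ≤ u) (t : ℝ) :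
    exp (l * t) ≤ 1 + l * t + l * (Set.Iic (-u)).indicator (fun s => |s|) t
      + l ^ 2 * (u ^ 2 + 16 / δ ^ 2 * exp (δ * t)) := by
  have hrest : 0 ≤ 16 / δ ^ 2 * exp (δ * t) := by positivity
  rcases le_or_gt t (-u) with htu | htu
  · have ht : t ≤ 0 := htu.trans (neg_nonpos.mpr hu)
    rw [Set.indicator_of_mem (Set.mem_Iic.mpr htu), abs_of_nonpos ht]
    nlinarith [exp_le_one_iff.mpr (mul_nonpos_of_nonneg_of_nonpos hl ht)]
  rw [Set.indicator_of_notMem (Set.notMem_Iic.mpr htu), mul_zero, add_zero]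
  rcases le_or_gt t 0 with ht | ht
  · have := exp_le_one_add_add_sq_of_nonpos (mul_nonpos_of_nonneg_of_nonpos hl ht)
    have htu2 : t ^ 2 ≤ u ^ 2 := by nlinarith
    nlinarith [mul_le_mul_of_nonneg_left htu2 (sq_nonneg l)]
  · have := exp_le_one_add_add_sq_mul_exp (mul_nonneg hl ht.le)
    have := sq_mul_exp_le_of_le_half hδ ht.le hlδ
    nlinarith

end Real

open Real

-- A real `limsup` that is not bounded above is the junk value `0`.
theorem Real.isBoundedUnder_le_of_limsup_ne_zero {ι : Type*} {f : Filter ι} {u : ι → ℝ}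
    (h : limsup u f ≠ 0) : IsBoundedUnder (· ≤ ·) f u :=
  by_contra fun hu => h (Real.limsup_of_not_isBoundedUnder hu)

theorem exists_sum_range_le_of_limsup_lt {m : ℕ → ℝ} {c : ℝ}
    (hbdd : IsBoundedUnder (· ≤ ·) atTop
      (fun n : ℕ => (1 / (n : ℝ)) * ∑ i ∈ Finset.range n, m i))
    (h : limsup (fun n : ℕ => (1 / (n : ℝ)) * ∑ i ∈ Finset.range n, m i) atTop < c) :
    ∃ B, ∀ n : ℕ, ∑ i ∈ Finset.range n, m i ≤ c * n + B := by
  have hev : ∀ᶠ n : ℕ in atTop, ∑ i ∈ Finset.range n, m i - c * n ≤ 0 := by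
    filter_upwards [eventually_lt_of_limsup_lt h hbdd, eventually_gt_atTop 0] with n hn hn0
    rw [one_div, inv_mul_lt_iff₀ (by exact_mod_cast hn0)] at hn
    linarith
  obtain ⟨B, hB⟩ := (isBoundedUnder_of_eventually_le hev).bddAbove_range
  exact ⟨B, fun n => by linarith [hB ⟨n, rfl⟩]⟩

section

variable {Ω : Type*} [MeasurableSpace Ω] {μ : Measure Ω}

theorem mgf_le_one_add_mul_integral_add [IsProbabilityMeasure μ] {X : Ω → ℝ} {δ l u : ℝ}
    (hX : Integrable X μ) (hexp : Integrable (fun ω => exp (δ * X ω)) μ) (hδ : 0 < δ)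
    (hl : 0 ≤ l) (hlδ : l ≤ δ / 2) (hu : 0 ≤ u) :
    mgf X μ l ≤ 1 + l * μ[X] + l * ∫ ω, {ω | X ω ≤ -u}.indicator (fun ω => |X ω|) ω ∂μ
      + l ^ 2 * (u ^ 2 + 16 / δ ^ 2 * ∫ ω, exp (δ * X ω) ∂μ) := by
  set tail : Ω → ℝ := {ω | X ω ≤ -u}.indicator (fun ω => |X ω|)
  have htail_eq : tail = (Set.Iic (-u)).indicator (fun s => |s|) ∘ X := rfl
  have htail : Integrable tail μ := by
    refine hX.abs.mono ?_ (ae_of_all _ fun ω => ?_)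
    · rw [htail_eq]
      exact ((measurable_abs.indicator measurableSet_Iic).comp_aemeasurable
        hX.aemeasurable).aestronglyMeasurable
    · simp only [tail, Set.indicator, norm_abs_eq_norm, Real.norm_eq_abs]
      split_ifs <;> simp
  have hlin : Integrable (fun ω => 1 + l * X ω) μ :=
    (integrable_const 1).add (hX.const_mul l)
  have hlin_tail : Integrable (fun ω => 1 + l * X ω + l * tail ω) μ :=
    hlin.add (htail.const_mul l)
  have hquad : Integrable (fun ω => u ^ 2 + 16 / δ ^ 2 * exp (δ * X ω)) μ :=
    (integrable_const _).add (hexp.const_mul _)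
  calc mgf X μ l ≤ ∫ ω, (1 + l * X ω + l * tail ω
        + l ^ 2 * (u ^ 2 + 16 / δ ^ 2 * exp (δ * X ω))) ∂μ :=
      integral_mono (integrable_exp_mul_of_nonneg_of_le hexp hl (by linarith))
        (hlin_tail.add (hquad.const_mul _))
        (fun ω => exp_mul_le_one_add_mul_add_indicator hδ hl hlδ hu (X ω))
    _ = _ := by
      rw [integral_add hlin_tail (hquad.const_mul _), integral_add hlin (htail.const_mul _),
        integral_add (integrable_const _) (hX.const_mul _), integral_const_mul (l ^ 2),
        integral_add (integrable_const _) (hexp.const_mul _)]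
      simp [integral_const_mul]

theorem mgf_le_exp_mul_integral_add [IsProbabilityMeasure μ] {X : Ω → ℝ} {δ l u C ε : ℝ}
    (hX : Integrable X μ) (hexp : Integrable (fun ω => exp (δ * X ω)) μ) (hδ : 0 < δ)
    (hl : 0 ≤ l) (hlδ : l ≤ δ / 2) (hu : 0 ≤ u) (hC : ∫ ω, exp (δ * X ω) ∂μ ≤ C)
    (htail : ∫ ω, {ω | X ω ≤ -u}.indicator (fun ω => |X ω|) ω ∂μ ≤ ε)
    (hlε : l * (u ^ 2 + 16 / δ ^ 2 * C) ≤ ε) :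
    mgf X μ l ≤ exp (l * (μ[X] + 2 * ε)) := by
  have hquad : l ^ 2 * (u ^ 2 + 16 / δ ^ 2 * ∫ ω, exp (δ * X ω) ∂μ) ≤ l * ε := by
    calc _ ≤ l * (l * (u ^ 2 + 16 / δ ^ 2 * C)) := by rw [← mul_assoc, ← sq]; gcongr
      _ ≤ l * ε := by gcongr
  calc mgf X μ l ≤ _ := mgf_le_one_add_mul_integral_add hX hexp hδ hl hlδ hu
    _ ≤ 1 + l * (μ[X] + 2 * ε) := by nlinarith [mul_le_mul_of_nonneg_left htail hl]
    _ ≤ _ := by linarith [add_one_le_exp (l * (μ[X] + 2 * ε))]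

theorem ProbabilityTheory.iIndepFun.mgf_sum_le_exp {ι : Type*} {X : ι → Ω → ℝ}
    (hindep : iIndepFun X μ) (hmeas : ∀ i, Measurable (X i)) {t : ℝ} {a : ι → ℝ}
    (h : ∀ i, mgf (X i) μ t ≤ exp (t * a i)) (s : Finset ι) :
    mgf (∑ i ∈ s, X i) μ t ≤ exp (t * ∑ i ∈ s, a i) := by
  rw [hindep.mgf_sum hmeas, Finset.mul_sum, exp_sum]
  exact Finset.prod_le_prod (fun _ _ => mgf_nonneg) (fun i _ => h i)

theorem measure_lt_le_exp_mul_mgf [IsFiniteMeasure μ] {X : Ω → ℝ} {t : ℝ} (x : ℝ)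
    (ht : 0 ≤ t) (hint : Integrable (fun ω => exp (t * X ω)) μ) :
    μ {ω | x < X ω} ≤ ENNReal.ofReal (exp (-t * x) * mgf X μ t) := by
  calc μ {ω | x < X ω} ≤ μ {ω | x ≤ X ω} :=
        measure_mono fun _ hω => le_of_lt (α := ℝ) hω
    _ = ENNReal.ofReal (μ.real {ω | x ≤ X ω}) :=
        (ofReal_measureReal (measure_ne_top _ _)).symm
    _ ≤ _ := ENNReal.ofReal_le_ofReal (measure_ge_le_exp_mul_mgf x ht hint)

theorem measure_iUnion_le_of_le_geometric {s : ℕ → Set Ω} {K r : ℝ} (hK : 0 ≤ K) (hr0 : 0 ≤ r)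
    (hr1 : r < 1) (hs : ∀ k, μ (s k) ≤ ENNReal.ofReal (K * r ^ (k + 1))) :
    μ (⋃ k, s k) ≤ ENNReal.ofReal (K * (r / (1 - r))) := by
  have hsum : HasSum (fun k => K * r ^ (k + 1)) (K * (r / (1 - r))) := by
    simpa [pow_succ', mul_assoc, div_eq_mul_inv] using
      ((hasSum_geometric_of_lt_one hr0 hr1).mul_left r).mul_left K
  calc μ (⋃ k, s k) ≤ ∑' k, μ (s k) := measure_iUnion_le s
    _ ≤ ∑' k, ENNReal.ofReal (K * r ^ (k + 1)) := ENNReal.tsum_le_tsum hs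
    _ = _ := by
      rw [← ENNReal.ofReal_tsum_of_nonneg (fun k => by positivity) hsum.summable, hsum.tsum_eq]

theorem measure_exists_lt_le_of_mgf_le_geometric [IsFiniteMeasure μ] {S : ℕ → Ω → ℝ}
    {t K r : ℝ} (ht : 0 ≤ t) (hK : 0 ≤ K) (hr0 : 0 ≤ r) (hr1 : r < 1)
    (hint : ∀ n, Integrable (fun ω => exp (t * S n ω)) μ)
    (hmgf : ∀ n, mgf (S n) μ t ≤ K * r ^ n) (x : ℝ) :
    μ {ω | ∃ k, x < S (k + 1) ω} ≤ ENNReal.ofReal (K * (r / (1 - r)) * exp (-t * x)) := by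
  rw [Set.ofPred_exists, mul_right_comm]
  refine measure_iUnion_le_of_le_geometric (by positivity) hr0 hr1 fun k => ?_
  refine (measure_lt_le_exp_mul_mgf x ht (hint _)).trans (ENNReal.ofReal_le_ofReal ?_)
  rw [mul_comm K, mul_assoc]
  exact mul_le_mul_of_nonneg_left (hmgf _) (exp_pos _).le

end

/-- Auxiliary lemma: independent r.v.s with uniformly bounded exponential moments,
uniformly integrable negative parts, and negative Cesàro-limsup means admit an
exponential bound on the tail of the running maximum of partial sums. -/
theorem lundberg_aux_lemma
    {Ω : Type*} [MeasurableSpace Ω] (μ : Measure Ω) [IsProbabilityMeasure μ]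
    (η : ℕ → Ω → ℝ) (hmeas : ∀ i, Measurable (η i))
    (hindep : iIndepFun η μ)
    (hint : ∀ i, Integrable (η i) μ)
    (δ : ℝ) (hδ : 0 < δ)
    (hexpint : ∀ i, Integrable (fun ω => Real.exp (δ * η i ω)) μ)
    (hC1 : ∃ C : ℝ, ∀ i, ∫ ω, Real.exp (δ * η i ω) ∂μ ≤ C)
    (hC2 : ∀ ε > (0 : ℝ), ∃ u₀ : ℝ, ∀ u ≥ u₀, ∀ i,
      ∫ ω, Set.indicator {ω | η i ω ≤ -u} (fun ω => |η i ω|) ω ∂μ ≤ ε)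
    (hC3 : Filter.limsup
      (fun n : ℕ => (1 / (n : ℝ)) * ∑ i ∈ Finset.range n, ∫ ω, η i ω ∂μ) atTop < 0) :
    ∃ c₃ > (0 : ℝ), ∃ c₄ > (0 : ℝ), ∀ x ≥ (0 : ℝ),
      μ {ω | ∃ k : ℕ, x < ∑ i ∈ Finset.range (k + 1), η i ω}
        ≤ ENNReal.ofReal (c₃ * Real.exp (-c₄ * x)) := by
  obtain ⟨C, hC⟩ := hC1
  have hCpos : 0 < C := (mgf_pos (hexpint 0)).trans_le (hC 0)
  set L := limsup (fun n : ℕ => (1 / (n : ℝ)) * ∑ i ∈ Finset.range n, ∫ ω, η i ω ∂μ) atTop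
  obtain ⟨ε, hε, hlim⟩ : ∃ ε > 0, L < -(3 * ε) := ⟨-L / 4, by linarith, by linarith⟩
  obtain ⟨B, hB⟩ :=
    exists_sum_range_le_of_limsup_lt (Real.isBoundedUnder_le_of_limsup_ne_zero hC3.ne) hlim
  obtain ⟨u₀, hu₀⟩ := hC2 ε hε
  set u := max u₀ 0
  set l := min (δ / 2) (ε / (u ^ 2 + 16 / δ ^ 2 * C))
  have hl : 0 < l := lt_min (by linarith) (by positivity)
  have hlδ : l ≤ δ / 2 := min_le_left _ _
  have hlε : l * (u ^ 2 + 16 / δ ^ 2 * C) ≤ ε :=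
    (le_div_iff₀ (by positivity)).mp (min_le_right _ _)
  have hmgf : ∀ n,
      mgf (∑ i ∈ Finset.range n, η i) μ l ≤ exp (l * B) * exp (-(l * ε)) ^ n := by
    intro n
    refine (hindep.mgf_sum_le_exp hmeas (fun i => mgf_le_exp_mul_integral_add (hint i)
      (hexpint i) hδ hl.le hlδ (le_max_right _ _) (hC i)
      (hu₀ u (le_max_left _ _) i) hlε) _).trans ?_
    rw [← exp_nat_mul, ← exp_add, exp_le_exp, Finset.sum_add_distrib]
    simp only [Finset.sum_const, Finset.card_range, nsmul_eq_mul]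
    nlinarith [hB n]
  have hr1 : exp (-(l * ε)) < 1 := exp_lt_one_iff.mpr (by nlinarith)
  refine ⟨exp (l * B) * (exp (-(l * ε)) / (1 - exp (-(l * ε)))),
    mul_pos (exp_pos _) (div_pos (exp_pos _) (sub_pos.mpr hr1)), l, hl, fun x _ => ?_⟩
  simpa only [Finset.sum_apply] using measure_exists_lt_le_of_mgf_le_geometric hl.le
    (exp_pos _).le (exp_pos _).le hr1 (fun n => hindep.integrable_exp_mul_sum hmeas
      fun i _ => integrable_exp_mul_of_nonneg_of_le (hexpint i) hl.le (by linarith)) hmgf x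
end

section
/- Let Z_i ≥ 0 and θ_i ≥ 0 be random variables with Z_i independent of θ_i for each i, c > 0. Assume sup_i E[e^{γ Z_i}] < ∞ for some γ > 0 and lim_{u→∞} sup_i E[θ_i 1_{θ_i > u}] = 0. Then lim_{u→∞} sup_i E[Z_i 1_{Z_i − cθ_i ≤ -u}] = 0. -/
/-!
On the event `Z_i - c θ_i ≤ -u` we have `θ_i ≥ u / c > u / (2c)`, so by independence the truncated
mean is at most `E[Z_i] · P(θ_i > u / (2c))`. The exponential moments bound `E[Z_i]` uniformly
(`x ≤ e^{γx} / γ`), and uniform integrability of the `θ_i` together with Markov's inequality gives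
`P(θ_i > v) ≤ 1 / v` uniformly once `v` is large. Hence the truncated means are `O(1 / u)`
uniformly in `i`.
-/

open MeasureTheory ProbabilityTheory

section

variable {Ω : Type*} [MeasurableSpace Ω] {μ : Measure Ω}

lemma integral_le_integral_exp_mul_div {X : Ω → ℝ} {γ : ℝ} (hγ : 0 < γ) (hX : Integrable X μ)
    (hexp : Integrable (fun ω => Real.exp (γ * X ω)) μ) :
    ∫ ω, X ω ∂μ ≤ (∫ ω, Real.exp (γ * X ω) ∂μ) / γ := by
  rw [← integral_div]
  refine integral_mono hX (hexp.div_const γ) fun ω => ?_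
  rw [le_div_iff₀' hγ]
  linarith [Real.add_one_le_exp (γ * X ω)]

lemma ProbabilityTheory.IndepFun.setIntegral_preimage_eq_mul {β : Type*} [MeasurableSpace β]
    {X : Ω → ℝ} {Y : Ω → β} (h : IndepFun X Y μ) (hX : AEMeasurable X μ) (hY : Measurable Y)
    {S : Set β} (hS : MeasurableSet S) :
    ∫ ω in Y ⁻¹' S, X ω ∂μ = μ.real (Y ⁻¹' S) * ∫ ω, X ω ∂μ :=
  ((IndepFun_iff_Indep X Y μ).1 h).symm.setIntegral_eq_mul (f := id) hY.comap_le hX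
    ⟨S, hS, rfl⟩ aestronglyMeasurable_id

lemma measureReal_lt_le_setIntegral_div [IsFiniteMeasure μ] {Y : Ω → ℝ} (hYm : Measurable Y)
    (hY : Integrable Y μ) {v : ℝ} (hv : 0 < v) :
    μ.real {ω | v < Y ω} ≤ (∫ ω in {ω | v < Y ω}, Y ω ∂μ) / v := by
  rw [le_div_iff₀' hv]
  exact setIntegral_ge_of_const_le_real (measurableSet_lt measurable_const hYm)
    (measure_ne_top μ _) (fun _ hω => le_of_lt hω) hY.integrableOn

lemma setIntegral_sub_mul_le_neg_le_measureReal_mul {X Y : Ω → ℝ} (hYm : Measurable Y)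
    (hX0 : ∀ ω, 0 ≤ X ω) (hX : Integrable X μ) (hXY : IndepFun X Y μ) {c u v : ℝ} (hc : 0 < c) (hv : v < u / c) :
    ∫ ω in {ω | X ω - c * Y ω ≤ -u}, X ω ∂μ ≤ μ.real {ω | v < Y ω} * ∫ ω, X ω ∂μ := by
  have hsub : {ω | X ω - c * Y ω ≤ -u} ⊆ {ω | v < Y ω} := fun ω hω => by
    have : u / c ≤ Y ω := by
      rw [div_le_iff₀ hc]
      linarith [hX0 ω, hω.out]
    exact hv.trans_le this
  calc ∫ ω in {ω | X ω - c * Y ω ≤ -u}, X ω ∂μ ≤ ∫ ω in {ω | v < Y ω}, X ω ∂μ :=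
        setIntegral_mono_set hX.integrableOn (ae_of_all _ hX0) hsub.eventuallyLE
    _ = μ.real {ω | v < Y ω} * ∫ ω, X ω ∂μ :=
        hXY.setIntegral_preimage_eq_mul (S := Set.Ioi v) hX.aemeasurable hYm measurableSet_Ioi

end

theorem claims_truncated_expectation_tendsto_zero_general
    {Ω : Type*} [MeasurableSpace Ω] (μ : Measure Ω) [IsProbabilityMeasure μ]
    (Z θ : ℕ → Ω → ℝ) (hZmeas : ∀ i, Measurable (Z i)) (hθmeas : ∀ i, Measurable (θ i))
    (hZpos : ∀ i ω, 0 ≤ Z i ω)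
    (hindep : ∀ i, IndepFun (Z i) (θ i) μ)
    (hZint : ∀ i, Integrable (Z i) μ) (hθint : ∀ i, Integrable (θ i) μ)
    (c : ℝ) (hc : 0 < c) (γ : ℝ) (hγ : 0 < γ)
    (hexpint : ∀ i, Integrable (fun ω => Real.exp (γ * Z i ω)) μ)
    (hC1 : ∃ C : ℝ, ∀ i, ∫ ω, Real.exp (γ * Z i ω) ∂μ ≤ C)
    (hC2 : ∀ ε > (0 : ℝ), ∃ u₀ : ℝ, ∀ u ≥ u₀, ∀ i,
      ∫ ω, Set.indicator {ω | u < θ i ω} (θ i) ω ∂μ ≤ ε) :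
    ∀ ε > (0 : ℝ), ∃ u₀ : ℝ, ∀ u ≥ u₀, ∀ i,
      ∫ ω, Set.indicator {ω | Z i ω - c * θ i ω ≤ -u} (Z i) ω ∂μ ≤ ε := by
  obtain ⟨C, hC⟩ := hC1
  obtain ⟨u₁, hu₁⟩ := hC2 1 one_pos
  set K := max C 1 / γ
  have hmean : ∀ i, ∫ ω, Z i ω ∂μ ≤ K := fun i =>
    (integral_le_integral_exp_mul_div hγ (hZint i) (hexpint i)).trans
      (div_le_div_of_nonneg_right ((hC i).trans (le_max_left _ _)) hγ.le)
  intro ε hε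
  refine ⟨max (2 * c * u₁) (max (2 * c * K / ε) 1), fun u hu i => ?_⟩
  simp only [ge_iff_le, max_le_iff] at hu
  obtain ⟨hu₁u, hKu, hu₀⟩ := hu
  have hv : 0 < u / (2 * c) := by positivity
  have htail : μ.real {ω | u / (2 * c) < θ i ω} ≤ 1 / (u / (2 * c)) := by
    refine (measureReal_lt_le_setIntegral_div (hθmeas i) (hθint i) hv).trans ?_
    rw [← integral_indicator (measurableSet_lt measurable_const (hθmeas i))]
    gcongr
    exact hu₁ _ ((le_div_iff₀ (by positivity)).2 (by linarith)) i
  rw [integral_indicator (measurableSet_le (by fun_prop) measurable_const)]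
  calc _ ≤ μ.real {ω | u / (2 * c) < θ i ω} * ∫ ω, Z i ω ∂μ :=
        setIntegral_sub_mul_le_neg_le_measureReal_mul (hθmeas i) (hZpos i) (hZint i)
          (hindep i) hc (div_lt_div_of_pos_left (by linarith) hc (by linarith))
    _ ≤ 1 / (u / (2 * c)) * K :=
        mul_le_mul htail (hmean i) (integral_nonneg (hZpos i)) (by positivity)
    _ = 2 * c * K / u := by field_simp
    _ ≤ ε := by
        rw [div_le_iff₀ hε] at hKu
        rw [div_le_iff₀ (by linarith)]
        linarith

/-- Under uniformly bounded exponential moments of the claims and uniform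
integrability of the interarrival times, `sup_i E[Z_i 1_{Z_i − cθ_i ≤ −u}] → 0`. -/
theorem claims_truncated_expectation_tendsto_zero
    {Ω : Type*} [MeasurableSpace Ω] (μ : Measure Ω) [IsProbabilityMeasure μ]
    (Z θ : ℕ → Ω → ℝ) (hZmeas : ∀ i, Measurable (Z i)) (hθmeas : ∀ i, Measurable (θ i))
    (hZpos : ∀ i ω, 0 ≤ Z i ω) (hθpos : ∀ i ω, 0 ≤ θ i ω)
    (hindep : ∀ i, IndepFun (Z i) (θ i) μ)
    (hZint : ∀ i, Integrable (Z i) μ) (hθint : ∀ i, Integrable (θ i) μ)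
    (c : ℝ) (hc : 0 < c) (γ : ℝ) (hγ : 0 < γ)
    (hexpint : ∀ i, Integrable (fun ω => Real.exp (γ * Z i ω)) μ)
    (hC1 : ∃ C : ℝ, ∀ i, ∫ ω, Real.exp (γ * Z i ω) ∂μ ≤ C)
    (hC2 : ∀ ε > (0 : ℝ), ∃ u₀ : ℝ, ∀ u ≥ u₀, ∀ i,
      ∫ ω, Set.indicator {ω | u < θ i ω} (θ i) ω ∂μ ≤ ε) :
    ∀ ε > (0 : ℝ), ∃ u₀ : ℝ, ∀ u ≥ u₀, ∀ i,
      ∫ ω, Set.indicator {ω | Z i ω - c * θ i ω ≤ -u} (Z i) ω ∂μ ≤ ε :=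
  claims_truncated_expectation_tendsto_zero_general μ Z θ hZmeas hθmeas hZpos hindep hZint hθint c
    hc γ hγ hexpint hC1 hC2
end
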